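/- Let Γ be a finite group, K a finite Γ-simplicial complex and L a Γ-subcomplex of K. Then (Sd²(K), Sd²(L)) is a 1-NDR pair. -/

import Mathlib

/-- An abstract simplicial complex on the vertex type `V`: a family of finite subsets of `V`
closed under taking subsets. -/
structure Cplx (V : Type*) where
  faces : Set (Set V)
  finite_mem : ∀ σ ∈ faces, Set.Finite σ
  down_closed : ∀ σ ∈ faces, ∀ τ ⊆ σ, τ ∈ faces

/-- The vertex set of a simplicial complex. -/
def Cplx.verts {V : Type*} (K : Cplx V) : Set V := {v | ({v} : Set V) ∈ K.faces}

/-- `a` is an action of the group `Γ` on the vertex type of `K` by simplicial automorphisms. -/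
def IsCplxAction (Γ : Type*) [Group Γ] {V : Type*} (a : Γ → V → V) (K : Cplx V) : Prop :=
  (∀ v, a 1 v = v) ∧ (∀ γ γ' : Γ, ∀ v, a (γ * γ') v = a γ (a γ' v)) ∧
    ∀ γ : Γ, ∀ σ ∈ K.faces, (a γ) '' σ ∈ K.faces

/-- A simplicial multi-map from `K` to `L`: it assigns to each vertex of `K` a nonempty subset
of the vertices of `L`, so that `⋃ v ∈ σ, η v` is a simplex of `L` for every simplex `σ` of
`K`. -/
def IsMultiMap {V W : Type*} (K : Cplx V) (L : Cplx W) (η : V → Set W) : Prop :=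
  (∀ v ∈ K.verts, (η v).Nonempty) ∧ ∀ σ ∈ K.faces, (⋃ v ∈ σ, η v) ∈ L.faces

/-- A Γ-equivariant simplicial multi-map, i.e. an element of `Map_Γ(K, L)`. -/
def IsEquivMultiMap (Γ : Type*) [Group Γ] {V W : Type*} (a : Γ → V → V) (b : Γ → W → W)
    (K : Cplx V) (L : Cplx W) (η : V → Set W) : Prop :=
  IsMultiMap K L η ∧ ∀ γ : Γ, ∀ v ∈ K.verts, η (a γ v) = (b γ) '' (η v)

/-- Pointwise order on multi-maps out of `K` (on the vertices of `K`). -/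
def mmLE {V W : Type*} (K : Cplx V) (η η' : V → Set W) : Prop := ∀ v ∈ K.verts, η v ⊆ η' v

/-- An element of `Def_Γ(K, L)`: a Γ-equivariant simplicial multi-map `K → K` with
`η v = {v}` for every vertex `v` of the subcomplex `L`. -/
def IsDefMultiMap (Γ : Type*) [Group Γ] {V : Type*} (a : Γ → V → V) (K L : Cplx V)
    (η : V → Set V) : Prop :=
  IsEquivMultiMap Γ a a K K η ∧ ∀ v ∈ L.verts, η v = {v}

/-- One step of a zigzag in `Def_Γ(K, L)`: both multi-maps lie in `Def_Γ(K, L)` and they are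
comparable. -/
def cplxDefStep (Γ : Type*) [Group Γ] {V : Type*} (a : Γ → V → V) (K L : Cplx V)
    (η η' : V → Set V) : Prop :=
  IsDefMultiMap Γ a K L η ∧ IsDefMultiMap Γ a K L η' ∧ (mmLE K η η' ∨ mmLE K η' η)

/-- The Γ-simplicial complex `K` strongly Γ-collapses to its Γ-subcomplex `L`: there is a
simplicial map `f` belonging to the identity component of `Def_Γ(K, L)` (joined to the
identity by a finite zigzag of pairwise comparable elements) whose image is contained in
`L`. -/
def CplxCollapses (Γ : Type*) [Group Γ] {V : Type*} (a : Γ → V → V) (K L : Cplx V) : Prop :=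
  ∃ f : V → V, IsDefMultiMap Γ a K L (fun v => {f v}) ∧
    Relation.ReflTransGen (cplxDefStep Γ a K L) (fun v => {v}) (fun v => {f v}) ∧
    ∀ σ ∈ K.faces, f '' σ ∈ L.faces
/-- The face poset of `K`, realized as the set of nonempty simplices of `K` inside the poset
`Set V` (ordered by inclusion). -/
def facePoset {V : Type*} (K : Cplx V) : Set (Set V) := {σ | σ ∈ K.faces ∧ σ.Nonempty}

/-- The barycentric subdivision `Sd(K) = Δ(FK)`: the simplicial complex on the nonempty
simplices of `K` whose simplices are the finite chains of the face poset of `K`. -/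
def sd {V : Type*} (K : Cplx V) : Cplx (Set V) where
  faces := {c | c.Finite ∧ (∀ σ ∈ c, σ ∈ facePoset K) ∧ IsChain (· ⊆ ·) c}
  finite_mem := fun _ h => h.1
  down_closed := fun c hc d hdc =>
    ⟨hc.1.subset hdc, fun σ hσ => hc.2.1 σ (hdc hσ),
      by exact hc.2.2.mono hdc⟩
/-- The neighborhood `ν_K(L) = ⋃_{v ∈ V(L)} st_K(v)` of the subcomplex `L` in `K`. -/
def nbhd {V : Type*} (K L : Cplx V) : Cplx V where
  faces := {σ | ∃ v ∈ L.verts, insert v σ ∈ K.faces}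
  finite_mem := fun σ h => by
    obtain ⟨v, -, h⟩ := h
    exact (K.finite_mem _ h).subset (Set.subset_insert _ _)
  down_closed := fun σ h τ hτσ => by
    obtain ⟨v, hv, h⟩ := h
    exact ⟨v, hv, K.down_closed _ h _ (Set.insert_subset_insert hτσ)⟩

/-- The iterated neighborhood `ν^r_K(L)` (with `ν^0_K(L) = L`). -/
def nbhdIter {V : Type*} (K L : Cplx V) : ℕ → Cplx V
  | 0 => L
  | r + 1 => nbhd K (nbhdIter K L r)

/-- `(K, L)` is an `r`-NDR pair of Γ-simplicial complexes: there is a Γ-subcomplex `A` of `K`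
containing `ν^r_K(L)` (and `L`) which strongly Γ-collapses to `L`. -/
def IsNDRPair (Γ : Type*) [Group Γ] {V : Type*} (a : Γ → V → V) (K L : Cplx V) (r : ℕ) : Prop :=
  ∃ A : Cplx V, A.faces ⊆ K.faces ∧ L.faces ⊆ A.faces ∧
    (∀ γ : Γ, ∀ σ ∈ A.faces, (a γ) '' σ ∈ A.faces) ∧
    (nbhdIter K L r).faces ⊆ A.faces ∧ CplxCollapses Γ a A L


/-!
Let `A` be the order complex of the chains `c` of `FK` that meet `FL`. The monotone map
`c ↦ c ∩ FL` fixes the chains of `FL`, so it retracts `A` onto `Sd²L`; and `A` contains the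
neighbourhood of `Sd²L` because a chain comparable with a chain of `FL` meets `FL`. The retraction
is reached from the identity by cutting the chains down one size at a time: consecutive stages
differ only on chains of one fixed size, no two of which are comparable, so the pair of
consecutive stages is again a simplicial multi-map and links them by a zigzag. Finiteness of `K`
bounds the number of stages, and everything commutes with the action of `Γ` by simplicial
automorphisms.
-/

/-- `sd K` is `orderCplx (facePoset K)` by definition. -/
def orderCplx {α : Type*} (P : Set (Set α)) : Cplx (Set α) where
  faces := {c | c.Finite ∧ (∀ σ ∈ c, σ ∈ P) ∧ IsChain (· ⊆ ·) c}
  finite_mem := fun _ h => h.1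
  down_closed := fun _ hc _ hdc =>
    ⟨hc.1.subset hdc, fun σ hσ => hc.2.1 σ (hdc hσ), by exact hc.2.2.mono hdc⟩

section orderCplx

variable {α β : Type*} {P Q : Set (Set α)}

lemma orderCplx_verts : (orderCplx P).verts = P := by
  ext v
  exact ⟨fun h => h.2.1 v rfl, fun h =>
    ⟨Set.finite_singleton v, by simpa using h, Set.subsingleton_singleton.isChain⟩⟩

lemma sd_verts (K : Cplx α) : (sd K).verts = facePoset K := orderCplx_verts

lemma orderCplx_mono (h : P ⊆ Q) : (orderCplx P).faces ⊆ (orderCplx Q).faces :=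
  fun _ hc => ⟨hc.1, fun σ hσ => h (hc.2.1 σ hσ), hc.2.2⟩

lemma image_mem_orderCplx {Q : Set (Set β)} {F : Set α → Set β} (hF : Set.MapsTo F P Q)
    (hmono : Monotone F) {C : Set (Set α)} (hC : C ∈ (orderCplx P).faces) :
    F '' C ∈ (orderCplx Q).faces :=
  ⟨hC.1.image F, Set.forall_mem_image.2 fun c hc => hF (hC.2.1 c hc),
    hC.2.2.image_of_map_rel _ _ F fun _ _ h => hmono h⟩

end orderCplx

section facePoset

variable {V : Type*} {K L : Cplx V}

lemma facePoset_mono (hLK : L.faces ⊆ K.faces) : facePoset L ⊆ facePoset K :=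
  fun _ h => ⟨hLK h.1, h.2⟩

lemma facePoset_finite (hfin : K.verts.Finite) : (facePoset K).Finite :=
  hfin.finite_subsets.subset fun σ hσ v hv =>
    K.down_closed σ hσ.1 {v} (Set.singleton_subset_iff.mpr hv)

lemma image_inter_facePoset {f : V → V} (hL : ∀ σ, f '' σ ∈ L.faces ↔ σ ∈ L.faces)
    (c : Set (Set V)) :
    Set.image f '' c ∩ facePoset L = Set.image f '' (c ∩ facePoset L) := by
  have hpre : Set.image f ⁻¹' facePoset L = facePoset L := by
    ext σ
    simp [facePoset, hL]
  rw [← Set.image_inter_preimage, hpre]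

end facePoset

section action

variable {Γ V : Type*} [Group Γ] {a : Γ → V → V} {K L : Cplx V}

lemma IsCplxAction.inv_apply_apply (ha : IsCplxAction Γ a K) (γ : Γ) (v : V) :
    a γ⁻¹ (a γ v) = v := by
  rw [← ha.2.1, inv_mul_cancel, ha.1]

lemma IsCplxAction.injective (ha : IsCplxAction Γ a K) (γ : Γ) : Function.Injective (a γ) :=
  Function.LeftInverse.injective (ha.inv_apply_apply γ)

lemma IsCplxAction.image_mem_iff (ha : IsCplxAction Γ a K)
    (haL : ∀ γ : Γ, ∀ σ ∈ L.faces, a γ '' σ ∈ L.faces) (γ : Γ) (σ : Set V) :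
    a γ '' σ ∈ L.faces ↔ σ ∈ L.faces := by
  refine ⟨fun h => ?_, haL γ σ⟩
  have h' := haL γ⁻¹ _ h
  simpa only [Set.image_image, ha.inv_apply_apply, Set.image_id'] using h'

end action

section retractStage

variable {V : Type*} {K L : Cplx V}

/-- Stage `t` of the deformation of `A` onto `Sd²L`. -/
noncomputable def retractStage (L : Cplx V) (t : ℕ) (c : Set (Set V)) : Set (Set V) :=
  if c.ncard < t then c ∩ facePoset L else c

lemma retractStage_zero (c : Set (Set V)) : retractStage L 0 c = c :=
  if_neg (Nat.not_lt_zero _)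

lemma retractStage_of_ncard_lt {t : ℕ} {c : Set (Set V)} (h : c.ncard < t) :
    retractStage L t c = c ∩ facePoset L :=
  if_pos h

lemma retractStage_of_subset {c : Set (Set V)} (h : c ⊆ facePoset L) (t : ℕ) :
    retractStage L t c = c := by
  unfold retractStage
  split_ifs <;> simp [Set.inter_eq_left.2 h]

lemma retractStage_image {f : V → V} (hf : Function.Injective f)
    (hL : ∀ σ, f '' σ ∈ L.faces ↔ σ ∈ L.faces) (t : ℕ) (c : Set (Set V)) :
    retractStage L t (Set.image f '' c) = Set.image f '' retractStage L t c := by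
  unfold retractStage
  rw [Set.ncard_image_of_injective c (Set.image_injective.2 hf)]
  split_ifs
  · exact image_inter_facePoset hL c
  · rfl

/-- If the smaller of two nested chains is kept but the larger one is cut, they have the same
size, hence are equal. -/
lemma retractStage_total_of_subset {c c' : Set (Set V)} (hc' : c'.Finite) (hcc : c ⊆ c')
    {s s' : ℕ} (hss : s' ≤ s + 1) :
    retractStage L s c ⊆ retractStage L s' c' ∨ retractStage L s' c' ⊆ retractStage L s c := by
  unfold retractStage
  split_ifs
  · exact Or.inl (Set.inter_subset_inter_left _ hcc)
  · exact Or.inl (Set.inter_subset_left.trans hcc)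
  · have hle : c'.ncard ≤ c.ncard := by omega
    rw [Set.eq_of_subset_of_ncard_le hcc hle hc']
    exact Or.inr Set.inter_subset_left
  · exact Or.inl hcc

lemma retractStage_total {c c' : Set (Set V)} (hc : c.Finite) (hc' : c'.Finite)
    (hcc : c ⊆ c' ∨ c' ⊆ c) {s s' : ℕ} (hss : s' ≤ s + 1) (hs's : s ≤ s' + 1) :
    retractStage L s c ⊆ retractStage L s' c' ∨ retractStage L s' c' ⊆ retractStage L s c := by
  rcases hcc with h | h
  · exact retractStage_total_of_subset hc' h hss
  · exact (retractStage_total_of_subset hc h hs's).symm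

end retractStage

section meetingChains

variable {V : Type*} {K L : Cplx V}

/-- The vertex set of `A`. -/
def meetingChains (K L : Cplx V) : Set (Set (Set V)) :=
  {c | c ∈ facePoset (sd K) ∧ (c ∩ facePoset L).Nonempty}

lemma facePoset_sd_subset_meetingChains (hLK : L.faces ⊆ K.faces) :
    facePoset (sd L) ⊆ meetingChains K L := by
  intro c hc
  refine ⟨facePoset_mono (orderCplx_mono (facePoset_mono hLK)) hc, ?_⟩
  rw [Set.inter_eq_left.2 hc.1.2.1]
  exact hc.2

lemma inter_facePoset_mem_facePoset_sd {c : Set (Set V)} (hc : c ∈ meetingChains K L) :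
    c ∩ facePoset L ∈ facePoset (sd L) :=
  ⟨⟨hc.1.1.1.subset Set.inter_subset_left, fun _ hσ => hσ.2,
    hc.1.1.2.2.mono Set.inter_subset_left⟩, hc.2⟩

lemma retractStage_mem_meetingChains (hLK : L.faces ⊆ K.faces) {c : Set (Set V)}
    (hc : c ∈ meetingChains K L) (t : ℕ) : retractStage L t c ∈ meetingChains K L := by
  unfold retractStage
  split_ifs
  · exact facePoset_sd_subset_meetingChains hLK (inter_facePoset_mem_facePoset_sd hc)
  · exact hc

lemma retractStage_eq_inter (hfin : K.verts.Finite) {c : Set (Set V)}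
    (hc : c ∈ meetingChains K L) :
    retractStage L ((facePoset K).ncard + 1) c = c ∩ facePoset L :=
  retractStage_of_ncard_lt <| Nat.lt_succ_of_le <|
    Set.ncard_le_ncard hc.1.1.2.1 (facePoset_finite hfin)

lemma image_mem_meetingChains {f : V → V} (hK : ∀ σ ∈ K.faces, f '' σ ∈ K.faces)
    (hL : ∀ σ, f '' σ ∈ L.faces ↔ σ ∈ L.faces) {c : Set (Set V)}
    (hc : c ∈ meetingChains K L) : Set.image f '' c ∈ meetingChains K L := by
  refine ⟨⟨image_mem_orderCplx (Q := facePoset K) (fun σ hσ => ⟨hK σ hσ.1, hσ.2.image f⟩)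
    Set.monotone_image hc.1.1, hc.1.2.image _⟩, ?_⟩
  rw [image_inter_facePoset hL]
  exact hc.2.image _

lemma inter_facePoset_nonempty_of_total {c d : Set (Set V)} (hc : c.Nonempty)
    (hd : d ∈ facePoset (sd L)) (hcd : c ⊆ d ∨ d ⊆ c) : (c ∩ facePoset L).Nonempty := by
  rcases hcd with h | h
  · obtain ⟨σ, hσ⟩ := hc
    exact ⟨σ, hσ, hd.1.2.1 σ (h hσ)⟩
  · obtain ⟨σ, hσ⟩ := hd.2
    exact ⟨σ, h hσ, hd.1.2.1 σ hσ⟩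

lemma nbhd_sd_sd_subset :
    (nbhd (sd (sd K)) (sd (sd L))).faces ⊆ (orderCplx (meetingChains K L)).faces := by
  rintro C ⟨d, hd, hdC⟩
  rw [sd_verts] at hd
  have hdC' : insert d C ∈ (orderCplx (meetingChains K L)).faces :=
    ⟨hdC.1, fun c hc => ⟨hdC.2.1 c hc, inter_facePoset_nonempty_of_total (hdC.2.1 c hc).2 hd
      (hdC.2.2.total hc (Set.mem_insert _ _))⟩, hdC.2.2⟩
  exact (orderCplx _).down_closed _ hdC' _ (Set.subset_insert _ _)

end meetingChains

section deformation

variable {Γ V : Type*} [Group Γ] {a : Γ → V → V} {K L : Cplx V}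

def chainAct (a : Γ → V → V) (γ : Γ) (c : Set (Set V)) : Set (Set V) := Set.image (a γ) '' c

lemma stagePair_mem_orderCplx (hLK : L.faces ⊆ K.faces) {C : Set (Set (Set V))}
    (hC : C ∈ (orderCplx (meetingChains K L)).faces) {s s' : ℕ} (hss : s' ≤ s + 1)
    (hs's : s ≤ s' + 1) :
    (⋃ c ∈ C, {retractStage L s c, retractStage L s' c}) ∈
      (orderCplx (meetingChains K L)).faces := by
  have hmem : ∀ x ∈ ⋃ c ∈ C, {retractStage L s c, retractStage L s' c},
      ∃ c ∈ C, ∃ r, (r = s ∨ r = s') ∧ x = retractStage L r c := by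
    intro x hx
    obtain ⟨c, hc, hx⟩ := Set.mem_iUnion₂.1 hx
    rcases hx with rfl | rfl
    exacts [⟨c, hc, s, Or.inl rfl, rfl⟩, ⟨c, hc, s', Or.inr rfl, rfl⟩]
  refine ⟨hC.1.biUnion fun c _ => Set.toFinite _, fun x hx => ?_, fun x hx y hy _ => ?_⟩
  · obtain ⟨c, hc, r, -, rfl⟩ := hmem x hx
    exact retractStage_mem_meetingChains hLK (hC.2.1 c hc) r
  · obtain ⟨c, hc, r, hr, rfl⟩ := hmem x hx
    obtain ⟨c', hc', r', hr', rfl⟩ := hmem y hy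
    exact retractStage_total (hC.2.1 c hc).1.1.1 (hC.2.1 c' hc').1.1.1 (hC.2.2.total hc hc')
      (by omega) (by omega)

lemma isDefMultiMap_stagePair (ha : IsCplxAction Γ a K)
    (haL : ∀ γ : Γ, ∀ σ ∈ L.faces, a γ '' σ ∈ L.faces) (hLK : L.faces ⊆ K.faces)
    {s s' : ℕ} (hss : s' ≤ s + 1) (hs's : s ≤ s' + 1) :
    IsDefMultiMap Γ (chainAct a) (orderCplx (meetingChains K L)) (sd (sd L))
      (fun c => {retractStage L s c, retractStage L s' c}) := by
  refine ⟨⟨⟨fun c _ => Set.insert_nonempty _ _,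
    fun C hC => stagePair_mem_orderCplx hLK hC hss hs's⟩, fun γ c _ => ?_⟩, fun c hc => ?_⟩
  · simp only [chainAct, Set.image_pair,
      retractStage_image (ha.injective γ) (ha.image_mem_iff haL γ)]
  · rw [sd_verts] at hc
    simp [retractStage_of_subset hc.1.2.1]

lemma isDefMultiMap_retractStage (ha : IsCplxAction Γ a K)
    (haL : ∀ γ : Γ, ∀ σ ∈ L.faces, a γ '' σ ∈ L.faces) (hLK : L.faces ⊆ K.faces) (t : ℕ) :
    IsDefMultiMap Γ (chainAct a) (orderCplx (meetingChains K L)) (sd (sd L))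
      (fun c => {retractStage L t c}) := by
  simpa only [Set.pair_eq_singleton] using
    isDefMultiMap_stagePair ha haL hLK (s := t) (s' := t) (by omega) (by omega)

lemma zigzag_retractStage (ha : IsCplxAction Γ a K)
    (haL : ∀ γ : Γ, ∀ σ ∈ L.faces, a γ '' σ ∈ L.faces) (hLK : L.faces ⊆ K.faces) (t : ℕ) :
    Relation.ReflTransGen
      (cplxDefStep Γ (chainAct a) (orderCplx (meetingChains K L)) (sd (sd L)))
      (fun c => {c}) (fun c => {retractStage L t c}) := by
  induction t with
  | zero =>
    simp only [retractStage_zero]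
    exact .refl
  | succ t ih =>
    have hpair := isDefMultiMap_stagePair ha haL hLK (s := t) (s' := t + 1) (by omega) (by omega)
    refine (ih.tail ⟨isDefMultiMap_retractStage ha haL hLK t, hpair, ?_⟩).tail
      ⟨hpair, isDefMultiMap_retractStage ha haL hLK (t + 1), ?_⟩
    · exact Or.inl fun c _ => by simp
    · exact Or.inr fun c _ => by simp

end deformation

theorem sd_sq_isNDRPair_general {Γ V : Type*} [Group Γ]
    (a : Γ → V → V) (K L : Cplx V) (ha : IsCplxAction Γ a K)
    (haL : ∀ γ : Γ, ∀ σ ∈ L.faces, (a γ) '' σ ∈ L.faces)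
    (hfin : K.verts.Finite) (hLK : L.faces ⊆ K.faces) :
    IsNDRPair Γ (fun γ (c : Set (Set V)) => (fun σ => (a γ) '' σ) '' c)
      (sd (sd K)) (sd (sd L)) 1 := by
  refine ⟨orderCplx (meetingChains K L), orderCplx_mono fun c hc => hc.1,
    orderCplx_mono (facePoset_sd_subset_meetingChains hLK),
    fun γ C hC => image_mem_orderCplx
      (fun c hc => image_mem_meetingChains (ha.2.2 γ) (ha.image_mem_iff haL γ) hc)
      Set.monotone_image hC,
    nbhd_sd_sd_subset, ?_⟩
  refine ⟨retractStage L ((facePoset K).ncard + 1), isDefMultiMap_retractStage ha haL hLK _,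
    zigzag_retractStage ha haL hLK _, fun C hC => ?_⟩
  rw [Set.image_congr fun c hc => retractStage_eq_inter hfin (hC.2.1 c hc)]
  exact image_mem_orderCplx (Q := facePoset (sd L))
    (fun c hc => inter_facePoset_mem_facePoset_sd hc)
    (fun _ _ h => Set.inter_subset_inter_left _ h) hC

/-- Let Γ be a finite group, K a finite Γ-simplicial complex and L a
Γ-subcomplex of K.  Then (Sd²(K), Sd²(L)) is a 1-NDR pair. -/
theorem sd_sq_isNDRPair {Γ V : Type*} [Group Γ] [Finite Γ]
    (a : Γ → V → V) (K L : Cplx V) (ha : IsCplxAction Γ a K)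
    (haL : ∀ γ : Γ, ∀ σ ∈ L.faces, (a γ) '' σ ∈ L.faces)
    (hfin : K.verts.Finite) (hLK : L.faces ⊆ K.faces) :
    IsNDRPair Γ (fun γ (c : Set (Set V)) => (fun σ => (a γ) '' σ) '' c)
      (sd (sd K)) (sd (sd L)) 1 :=
  sd_sq_isNDRPair_general a K L ha haL hfin hLK
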